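/- arXiv:2201.07575 — 2 statements merged into one kernel-verified Lean document; each statement's English description precedes it below -/
import Mathlib

section
/- For any matrices E, A ∈ ℝ^{m×n}, C ∈ ℝ^{p×n}, if rank [E A; 0 E; 0 C] = n + rank E, then every x ∈ ℝ^n with x ∈ ker E, A x ∈ im E and C x = 0 satisfies x = 0. -/
theorem I_observability_rank_implies (m p n : ℕ)
    (E A : Matrix (Fin m) (Fin n) ℝ) (C : Matrix (Fin p) (Fin n) ℝ)
    (M : Matrix ((Fin m ⊕ Fin m) ⊕ Fin p) (Fin n ⊕ Fin n) ℝ)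
    (hM : M = Matrix.fromRows (Matrix.fromBlocks E A 0 E)
      (Matrix.fromCols (0 : Matrix (Fin p) (Fin n) ℝ) C))
    (hrank : M.rank = n + E.rank) :
    ∀ x : Fin n → ℝ, E.mulVec x = 0 → C.mulVec x = 0 →
      A.mulVec x ∈ LinearMap.range E.mulVecLin → x = 0 := by
  intro x hEx hCx hAx
  obtain ⟨y, hy⟩ := hAx
  -- the embedding z ↦ Sum.elim z 0
  let f : (Fin n → ℝ) →ₗ[ℝ] (Fin n ⊕ Fin n → ℝ) :=
    { toFun := fun z => Sum.elim z 0
      map_add' := by intro a b; ext i; cases i <;> simp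
      map_smul' := by intro c a; ext i; cases i <;> simp }
  have hf_inj : Function.Injective f := by
    intro a b hab
    funext i
    have := congrFun hab (Sum.inl i)
    simpa [f] using this
  -- image of ker E under f is contained in ker M
  have hle : (LinearMap.ker E.mulVecLin).map f ≤ LinearMap.ker M.mulVecLin := by
    rintro v ⟨z, hz, rfl⟩
    have hz' : E.mulVec z = 0 := hz
    simp only [LinearMap.mem_ker, Matrix.mulVecLin_apply, hM]
    funext i
    rcases i with (i | i) | i
    · simp [Matrix.fromRows_mulVec, Matrix.fromBlocks_mulVec, f, hz']
    · simp [Matrix.fromRows_mulVec, Matrix.fromBlocks_mulVec, f, hz']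
    · simp [Matrix.fromRows_mulVec, Matrix.fromCols_mulVec_sumElim, f]
  -- rank-nullity computations
  have h1 := LinearMap.finrank_range_add_finrank_ker M.mulVecLin
  have h2 := LinearMap.finrank_range_add_finrank_ker E.mulVecLin
  have hdom1 : Module.finrank ℝ (Fin n ⊕ Fin n → ℝ) = n + n := by
    simp [Module.finrank_fintype_fun_eq_card]
  have hdom2 : Module.finrank ℝ (Fin n → ℝ) = n := by
    simp [Module.finrank_fintype_fun_eq_card]
  rw [hdom1] at h1
  rw [hdom2] at h2
  have hrankM : Module.finrank ℝ (LinearMap.range M.mulVecLin) = n + E.rank := hrank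
  have hrankE : Module.finrank ℝ (LinearMap.range E.mulVecLin) = E.rank := rfl
  rw [hrankM] at h1
  rw [hrankE] at h2
  have hEle : E.rank ≤ n := by omega
  have hkerdim : Module.finrank ℝ (LinearMap.ker M.mulVecLin) =
      Module.finrank ℝ (LinearMap.ker E.mulVecLin) := by omega
  have hmapdim : Module.finrank ℝ ((LinearMap.ker E.mulVecLin).map f) =
      Module.finrank ℝ (LinearMap.ker E.mulVecLin) :=
    ((Submodule.equivMapOfInjective f hf_inj _).symm.finrank_eq)
  -- equality of submodules
  have heq : (LinearMap.ker E.mulVecLin).map f = LinearMap.ker M.mulVecLin := by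
    apply Submodule.eq_of_le_of_finrank_le hle
    rw [hmapdim, ← hkerdim]
  -- v = Sum.elim (-y) x is in ker M
  have hv : Sum.elim (-y) x ∈ LinearMap.ker M.mulVecLin := by
    simp only [LinearMap.mem_ker, Matrix.mulVecLin_apply, hM]
    funext i
    rcases i with (i | i) | i
    · have hy' : E.mulVec y = A.mulVec x := by
        simpa [Matrix.mulVecLin_apply] using hy
      have : E.mulVec (-y) + A.mulVec x = 0 := by
        rw [Matrix.mulVec_neg, hy']; ring_nf
      simp [Matrix.fromRows_mulVec, Matrix.fromBlocks_mulVec]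
      exact congrFun this i
    · simp [Matrix.fromRows_mulVec, Matrix.fromBlocks_mulVec, hEx]
    · simp [Matrix.fromRows_mulVec, Matrix.fromCols_mulVec_sumElim, hCx]
  rw [← heq] at hv
  obtain ⟨z, _, hzv⟩ := hv
  funext i
  have hxi := congrFun hzv (Sum.inr i)
  simpa [f] using hxi.symm
end

section
/- For the permutation-structure identity: for all l ≥ 1, rank F_{l,L} = rank F_l if and only if ker F_l ⊆ ℝ^n × ker L × ⋯ × ker L ((l−1) copies of ker L), where F_l is the block bidiagonal matrix with diagonal blocks Ē and superdiagonal blocks Ā (l block rows and l block columns), and F_{l,L} is the analogous matrix built from Ē_1 = [Ē; 0] and Ā_1 = [Ā; L]. -/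
/-- The block bidiagonal matrix with `l` block rows and columns, diagonal
blocks `Eb` and superdiagonal blocks `Ab`. -/
def Fblock (l : ℕ) {α n : Type*} (Eb Ab : Matrix α n ℝ) :
    Matrix (Fin l × α) (Fin l × n) ℝ :=
  fun ia jb =>
    if jb.1 = ia.1 then Eb ia.2 jb.2
    else if (jb.1 : ℕ) = (ia.1 : ℕ) + 1 then Ab ia.2 jb.2 else 0

theorem rank_Fl_eq_rank_FlL_iff (m p n r : ℕ)
    (E A : Matrix (Fin m) (Fin n) ℝ) (C : Matrix (Fin p) (Fin n) ℝ)
    (L : Matrix (Fin r) (Fin n) ℝ)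
    (Ebar : Matrix (Fin m ⊕ Fin p) (Fin n) ℝ) (hE : Ebar = Matrix.fromRows E 0)
    (Abar : Matrix (Fin m ⊕ Fin p) (Fin n) ℝ) (hA : Abar = Matrix.fromRows A C)
    (Ebar1 : Matrix ((Fin m ⊕ Fin p) ⊕ Fin r) (Fin n) ℝ)
    (hE1 : Ebar1 = Matrix.fromRows Ebar 0)
    (Abar1 : Matrix ((Fin m ⊕ Fin p) ⊕ Fin r) (Fin n) ℝ)
    (hA1 : Abar1 = Matrix.fromRows Abar L) :
    ∀ l, 1 ≤ l →
      ((Fblock l Ebar1 Abar1).rank = (Fblock l Ebar Abar).rank ↔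
        ∀ x : Fin l × Fin n → ℝ, x ∈ LinearMap.ker (Fblock l Ebar Abar).mulVecLin →
          ∀ j : Fin l, 1 ≤ (j : ℕ) → L.mulVec (fun b => x (j, b)) = 0) := by
  intro l hl
  classical
  -- component formulas
  have hinl : ∀ (x : Fin l × Fin n → ℝ) (i : Fin l) (a : Fin m ⊕ Fin p),
      (Fblock l Ebar1 Abar1).mulVec x (i, Sum.inl a) =
      (Fblock l Ebar Abar).mulVec x (i, a) := by
    intro x i a
    unfold Matrix.mulVec dotProduct
    refine Finset.sum_congr rfl ?_
    rintro ⟨j, b⟩ -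
    simp [Fblock, hE1, hA1]
  have hinr : ∀ (x : Fin l × Fin n → ℝ) (i : Fin l) (k : Fin r),
      (Fblock l Ebar1 Abar1).mulVec x (i, Sum.inr k) =
      ∑ j : Fin l, if (j : ℕ) = (i : ℕ) + 1 then
        L.mulVec (fun b => x (j, b)) k else 0 := by
    intro x i k
    unfold Matrix.mulVec dotProduct
    rw [Fintype.sum_prod_type]
    refine Finset.sum_congr rfl ?_
    intro j _
    by_cases hj : (j : ℕ) = (i : ℕ) + 1
    · have hji : j ≠ i := by
        intro h; subst h; omega
      simp [Fblock, hE1, hA1, hj, hji, Matrix.mulVec, dotProduct]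
    · by_cases hji : j = i
      · subst hji
        simp [Fblock, hE1, hj]
      · simp [Fblock, hj, hji]
  -- kernel characterization
  have hker : ∀ x : Fin l × Fin n → ℝ,
      (Fblock l Ebar1 Abar1).mulVec x = 0 ↔
      ((Fblock l Ebar Abar).mulVec x = 0 ∧
        ∀ j : Fin l, 1 ≤ (j : ℕ) → L.mulVec (fun b => x (j, b)) = 0) := by
    intro x
    constructor
    · intro h
      constructor
      · funext ia
        obtain ⟨i, a⟩ := ia
        have h0 := congrFun h (i, Sum.inl a)
        rw [hinl] at h0
        simpa using h0
      · intro j hj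
        funext k
        have hjlt : (j : ℕ) - 1 < l := by omega
        have hji : (j : ℕ) = ((⟨(j : ℕ) - 1, hjlt⟩ : Fin l) : ℕ) + 1 := by
          simp; omega
        have h0 := congrFun h (⟨(j : ℕ) - 1, hjlt⟩, Sum.inr k)
        rw [hinr] at h0
        rw [Finset.sum_eq_single j] at h0
        · rw [if_pos hji] at h0
          simpa using h0
        · intro j' _ hj'
          have hne : (j' : ℕ) ≠ ((⟨(j : ℕ) - 1, hjlt⟩ : Fin l) : ℕ) + 1 := by
            intro hc
            apply hj'
            apply Fin.ext
            omega
          simp [hne]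
        · intro h'
          exact absurd (Finset.mem_univ j) h'
    · rintro ⟨h1, h2⟩
      funext ic
      obtain ⟨i, c⟩ := ic
      cases c with
      | inl a =>
        rw [hinl]
        simpa using congrFun h1 (i, a)
      | inr k =>
        rw [hinr]
        simp only [Pi.zero_apply]
        refine Finset.sum_eq_zero ?_
        intro j _
        by_cases hj : (j : ℕ) = (i : ℕ) + 1
        · have h1j : 1 ≤ (j : ℕ) := by omega
          simp [hj, congrFun (h2 j h1j) k]
        · simp [hj]
  -- kernel inclusion
  have hle : LinearMap.ker (Fblock l Ebar1 Abar1).mulVecLin ≤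
      LinearMap.ker (Fblock l Ebar Abar).mulVecLin := by
    intro x hx
    rw [LinearMap.mem_ker, Matrix.mulVecLin_apply] at hx ⊢
    exact ((hker x).mp hx).1
  have hrnG := LinearMap.finrank_range_add_finrank_ker
    (Fblock l Ebar1 Abar1).mulVecLin
  have hrnF := LinearMap.finrank_range_add_finrank_ker
    (Fblock l Ebar Abar).mulVecLin
  have hGdef : (Fblock l Ebar1 Abar1).rank =
      Module.finrank ℝ (LinearMap.range (Fblock l Ebar1 Abar1).mulVecLin) := rfl
  have hFdef : (Fblock l Ebar Abar).rank =
      Module.finrank ℝ (LinearMap.range (Fblock l Ebar Abar).mulVecLin) := rfl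
  constructor
  · intro hrank x hx j hj
    have hfr : Module.finrank ℝ (LinearMap.ker (Fblock l Ebar Abar).mulVecLin) ≤
        Module.finrank ℝ (LinearMap.ker (Fblock l Ebar1 Abar1).mulVecLin) := by
      omega
    have heq := Submodule.eq_of_le_of_finrank_le hle hfr
    have hx' : x ∈ LinearMap.ker (Fblock l Ebar1 Abar1).mulVecLin := by
      rw [heq]; exact hx
    rw [LinearMap.mem_ker, Matrix.mulVecLin_apply] at hx'
    exact ((hker x).mp hx').2 j hj
  · intro hcond
    have heq : LinearMap.ker (Fblock l Ebar1 Abar1).mulVecLin =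
        LinearMap.ker (Fblock l Ebar Abar).mulVecLin := by
      apply le_antisymm hle
      intro x hx
      have hx' : (Fblock l Ebar Abar).mulVec x = 0 := by
        rw [LinearMap.mem_ker, Matrix.mulVecLin_apply] at hx
        exact hx
      rw [LinearMap.mem_ker, Matrix.mulVecLin_apply, hker]
      exact ⟨hx', hcond x (by rw [LinearMap.mem_ker, Matrix.mulVecLin_apply]; exact hx')⟩
    rw [heq] at hrnG
    omega
end
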